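/- arXiv:1203.6792 — 3 statements merged into one kernel-verified Lean document; each statement's English description precedes it below -/
import Mathlib

section
/- For every Dyck path γ of semilength n, the number of Dyck paths of semilength n that cover γ in the Dyck lattice D_n equals the number of occurrences of the factor DU in γ (valleys), and the number of Dyck paths of semilength n covered by γ equals the number of occurrences of the factor UD in γ whose starting height is at least 1 (peaks not on the x-axis). -/
/-- Steps of a (Grand) Dyck path: up `U = (1,1)` and down `D = (1,-1)`. -/
inductive Step : Type
  | U : Step
  | D : Step
  deriving DecidableEq

/-- The height of a path: number of up steps minus number of down steps. -/
def height (w : List Step) : ℤ := (w.count Step.U : ℤ) - (w.count Step.D : ℤ)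

/-- A Dyck path of semilength `n`: a word of length `2n` with `n` up steps
(hence `n` down steps) all of whose prefixes have nonnegative height. -/
def IsDyck (n : ℕ) (w : List Step) : Prop :=
  w.length = 2 * n ∧ w.count Step.U = n ∧ ∀ i : ℕ, 0 ≤ height (w.take i)

/-- A Grand Dyck path of semilength `n`: a word of length `2n` with `n` up steps. -/
def IsGrandDyck (n : ℕ) (w : List Step) : Prop :=
  w.length = 2 * n ∧ w.count Step.U = n

/-- The order on paths: pointwise comparison of the heights after each number of steps. -/
def PathLe (w w' : List Step) : Prop :=
  ∀ i : ℕ, height (w.take i) ≤ height (w'.take i)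

/-- Strict order on paths. -/
def PathLt (w w' : List Step) : Prop := PathLe w w' ∧ ¬ PathLe w' w

/-- `Covers P w w'` : within the class of paths satisfying `P`, the path `w'` covers `w`,
i.e. `w < w'` and no path of the class lies strictly between them. -/
def Covers (P : List Step → Prop) (w w' : List Step) : Prop :=
  P w ∧ P w' ∧ PathLt w w' ∧ ∀ z : List Step, P z → ¬ (PathLt w z ∧ PathLt z w')

/-- Number of occurrences of the factor `xy` in the word `w`. -/
def countFactor (x y : Step) (w : List Step) : ℕ :=
  ((Finset.range w.length).filter
    (fun i => w[i]? = some x ∧ w[i + 1]? = some y)).card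

/-- Number of occurrences of the factor `xy` in the word `w` whose starting height
(the height after the first `i` steps, the factor occupying positions `i` and `i+1`,
`0`-indexed) is at least `1`. -/
def countFactorHigh (x y : Step) (w : List Step) : ℕ :=
  ((Finset.range w.length).filter
    (fun i => w[i]? = some x ∧ w[i + 1]? = some y ∧ 1 ≤ height (w.take i))).card

/-!
Raising a valley `DU` of `γ` to `UD` changes the height profile at a single point, by `+2`, and
a path squeezed in between agrees with both elsewhere, so it coincides with one of the two: this
is a cover. Conversely, if `γ < w`, look at a point where `w` is strictly above `γ` and `γ` is as
low as possible. Parity makes the gap there at least `2`, and minimality forces `γ` to have a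
valley there, whose raising still lies below `w`; hence every cover is such a raising.
The argument only uses that the class of paths is order-convex among paths with the same length and
number of `U`s. Exchanging `U` and `D` reverses the order and maps Dyck paths to such a class, which
turns covers into coverings and valleys into peaks; lowering a peak of a Dyck path stays a Dyck path
exactly when the peak does not start on the axis.
-/

namespace Step

def sign : Step → ℤ
  | U => 1
  | D => -1

def flip : Step → Step
  | U => D
  | D => U

@[simp] lemma flip_flip (s : Step) : s.flip.flip = s := by cases s <;> rfl

lemma flip_involutive : Function.Involutive flip := flip_flip

lemma sign_injective : Function.Injective sign := by
  intro a b h; cases a <;> cases b <;> first | rfl | cases h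

end Step

lemma count_U_add_count_D (w : List Step) : w.count .U + w.count .D = w.length := by
  induction w with
  | nil => rfl
  | cons s w ih => cases s <;> simp <;> omega

lemma height_eq_two_mul_count_sub_length (w : List Step) :
    height w = 2 * w.count .U - w.length := by
  have := count_U_add_count_D w
  unfold height
  omega

@[simp] lemma height_nil : height [] = 0 := rfl

lemma height_append (a b : List Step) : height (a ++ b) = height a + height b := by
  simp only [height, List.count_append]; push_cast; ring

lemma height_cons (s : Step) (w : List Step) : height (s :: w) = s.sign + height w := by
  rw [← List.singleton_append, height_append]; cases s <;> rfl

lemma height_map_flip (w : List Step) : height (w.map Step.flip) = -height w := by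
  induction w with
  | nil => rfl
  | cons s w ih =>
    rw [List.map_cons, height_cons, height_cons, ih]
    cases s <;> simp only [Step.flip, Step.sign] <;> ring

lemma height_take_succ_of_getElem? {w : List Step} {k : ℕ} {s : Step} (h : w[k]? = some s) :
    height (w.take (k + 1)) = height (w.take k) + s.sign := by
  rw [List.take_add_one, h, Option.toList_some, height_append, height_cons, height_nil, add_zero]

lemma abs_height_take_succ_sub_le (w : List Step) (k : ℕ) :
    |height (w.take (k + 1)) - height (w.take k)| ≤ 1 := by
  rcases h : w[k]? with _ | s
  · simp [List.take_add_one, h]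
  · rw [height_take_succ_of_getElem? h]; cases s <;> simp [Step.sign]

lemma PathLe.antisymm {w w' : List Step} (h : PathLe w w') (h' : PathLe w' w)
    (hlen : w.length = w'.length) : w = w' := by
  refine List.ext_getElem hlen fun k hk hk' => Step.sign_injective ?_
  have e := height_take_succ_of_getElem? (List.getElem?_eq_getElem hk)
  have e' := height_take_succ_of_getElem? (List.getElem?_eq_getElem hk')
  linarith [h k, h' k, h (k + 1), h' (k + 1)]

lemma pathLe_map_flip {w w' : List Step} :
    PathLe (w.map Step.flip) (w'.map Step.flip) ↔ PathLe w' w := by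
  simp only [PathLe, ← List.map_take, height_map_flip, neg_le_neg_iff]

lemma height_take_append_cons_cons (p s : List Step) (a b : Step) (k : ℕ) :
    height ((p ++ b :: a :: s).take k) =
      height ((p ++ a :: b :: s).take k) + if k = p.length + 1 then b.sign - a.sign else 0 := by
  rw [List.take_append, List.take_append, height_append, height_append]
  obtain hk | rfl | hk : k ≤ p.length ∨ k = p.length + 1 ∨ p.length + 2 ≤ k := by omega
  · simp [Nat.sub_eq_zero_of_le hk, if_neg (show k ≠ p.length + 1 by omega)]
  · simp [height_cons]
  · obtain ⟨m, rfl⟩ : ∃ m, k = p.length + 2 + m := ⟨k - (p.length + 2), by omega⟩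
    rw [if_neg (by omega), show p.length + 2 + m - p.length = m + 2 by omega]
    simp only [List.take_succ_cons, height_cons]; ring

def raiseAt (w : List Step) (i : ℕ) : List Step := w.take i ++ .U :: .D :: w.drop (i + 2)

def lowerAt (w : List Step) (i : ℕ) : List Step := w.take i ++ .D :: .U :: w.drop (i + 2)

lemma raiseAt_map_flip (w : List Step) (i : ℕ) :
    raiseAt (w.map Step.flip) i = (lowerAt w i).map Step.flip := by
  simp [raiseAt, lowerAt, List.map_take, List.map_drop, Step.flip]

lemma eq_take_append_cons_cons {w : List Step} {i : ℕ} {a b : Step}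
    (ha : w[i]? = some a) (hb : w[i + 1]? = some b) :
    w = w.take i ++ a :: b :: w.drop (i + 2) := by
  obtain ⟨hi, rfl⟩ := List.getElem?_eq_some_iff.1 ha
  obtain ⟨hi', rfl⟩ := List.getElem?_eq_some_iff.1 hb
  rw [← List.drop_eq_getElem_cons hi', ← List.drop_eq_getElem_cons hi, List.take_append_drop]

lemma take_append_cons_cons_drop_perm {w : List Step} {i : ℕ} {a b : Step}
    (ha : w[i]? = some a) (hb : w[i + 1]? = some b) :
    (w.take i ++ b :: a :: w.drop (i + 2)).Perm w := by
  conv_rhs => rw [eq_take_append_cons_cons ha hb]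
  exact (List.Perm.swap _ _ _).append_left _

section Valley

variable {w : List Step} {i : ℕ} (hD : w[i]? = some .D) (hU : w[i + 1]? = some .U)
include hD hU

lemma height_take_raiseAt (k : ℕ) :
    height ((raiseAt w i).take k) = height (w.take k) + if k = i + 1 then 2 else 0 := by
  have hi : (w.take i).length = i := List.length_take_of_le (List.getElem?_eq_some_iff.1 hD).1.le
  conv_rhs => rw [eq_take_append_cons_cons hD hU]
  rw [raiseAt, height_take_append_cons_cons, hi]
  rfl

lemma pathLt_raiseAt : PathLt w (raiseAt w i) := by
  refine ⟨fun k => ?_, fun h => ?_⟩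
  · rw [height_take_raiseAt hD hU]; split_ifs <;> simp
  · have := h (i + 1); rw [height_take_raiseAt hD hU, if_pos rfl] at this; linarith

lemma pathLe_or_pathLe_of_pathLe_raiseAt {z : List Step} (hlen : z.length = w.length)
    (hwz : PathLe w z) (hzr : PathLe z (raiseAt w i)) : PathLe z w ∨ PathLe (raiseAt w i) z := by
  have heq : ∀ k ≠ i + 1, height (z.take k) = height (w.take k) := fun k hk =>
    le_antisymm (by simpa [height_take_raiseAt hD hU, hk] using hzr k) (hwz k)
  obtain ⟨s, hs⟩ : ∃ s, z[i]? = some s :=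
    Option.isSome_iff_exists.1 (by simp [hlen, (List.getElem?_eq_some_iff.1 hD).1])
  have hz := height_take_succ_of_getElem? hs
  have hw := height_take_succ_of_getElem? hD
  rw [heq i (by omega)] at hz
  cases s
  · refine .inr fun k => ?_
    rcases eq_or_ne k (i + 1) with rfl | hk
    · rw [height_take_raiseAt hD hU, hz, hw, if_pos rfl, Step.sign, Step.sign]; linarith
    · rw [height_take_raiseAt hD hU, if_neg hk, heq k hk, add_zero]
  · refine .inl fun k => ?_
    rcases eq_or_ne k (i + 1) with rfl | hk
    · rw [hz, hw]
    · rw [heq k hk]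

end Valley

lemma exists_valley_pathLe_raiseAt {w w' : List Step} (hlen : w.length = w'.length)
    (hU : w.count .U = w'.count .U) (hle : PathLe w w') (hne : w ≠ w') :
    ∃ i, w[i]? = some .D ∧ w[i + 1]? = some .U ∧ PathLe (raiseAt w i) w' := by
  have hend : ∀ k, w.length ≤ k → height (w.take k) = height (w'.take k) := fun k hk => by
    rw [List.take_of_length_le hk, List.take_of_length_le (hlen ▸ hk),
      height_eq_two_mul_count_sub_length, height_eq_two_mul_count_sub_length, hU, hlen]
  let S := (Finset.range (w.length + 1)).filter fun k => height (w.take k) < height (w'.take k)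
  have mem_S : ∀ k, height (w.take k) < height (w'.take k) → k ∈ S := fun k hk =>
    Finset.mem_filter.2 ⟨Finset.mem_range.2 (by
      by_contra h; exact (hend k (by omega)).not_lt hk), hk⟩
  have hS : S.Nonempty := by
    obtain ⟨k, hk⟩ : ∃ k, height (w.take k) < height (w'.take k) := by
      by_contra! h; exact hne (hle.antisymm h hlen)
    exact ⟨k, mem_S k hk⟩
  -- At a point of `S` where `w` is lowest, `w` has to come down into it and go up out of it.
  obtain ⟨k, hkS, hmin⟩ := S.exists_min_image (fun k => height (w.take k)) hS
  have hk := (Finset.mem_filter.1 hkS).2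
  obtain ⟨i, rfl⟩ : ∃ i, k = i + 1 :=
    Nat.exists_eq_succ_of_ne_zero fun h => by simp [h] at hk
  have hi : i + 1 < w.length := by
    by_contra h; exact (hend _ (by omega)).not_lt hk
  have hgap : height (w.take (i + 1)) + 2 ≤ height (w'.take (i + 1)) := by
    have e := height_eq_two_mul_count_sub_length (w.take (i + 1))
    have e' := height_eq_two_mul_count_sub_length (w'.take (i + 1))
    rw [List.length_take, hlen] at e
    rw [List.length_take] at e'
    omega
  obtain ⟨a, ha⟩ : ∃ a, w[i]? = some a := ⟨w[i], List.getElem?_eq_getElem (by omega)⟩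
  obtain ⟨b, hb⟩ : ∃ b, w[i + 1]? = some b := ⟨w[i + 1], List.getElem?_eq_getElem hi⟩
  have ha' := height_take_succ_of_getElem? ha
  have hb' := height_take_succ_of_getElem? hb
  have h1 := abs_le.1 (abs_height_take_succ_sub_le w' i)
  have h2 := abs_le.1 (abs_height_take_succ_sub_le w' (i + 1))
  have haD : a = .D := by
    cases a
    · have := hmin i (mem_S i (by simp only [Step.sign] at ha'; linarith))
      simp only [Step.sign] at ha'; linarith
    · rfl
  have hbU : b = .U := by
    cases b
    · rfl
    · have := hmin (i + 2) (mem_S (i + 2) (by simp only [Step.sign] at hb'; linarith))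
      simp only [Step.sign] at hb'; linarith
  subst haD hbU
  refine ⟨i, ha, hb, fun k => ?_⟩
  rw [height_take_raiseAt ha hb]
  split_ifs with h
  · exact h ▸ hgap
  · simpa using hle k

lemma IsGrandDyck.of_perm {n : ℕ} {w w' : List Step} (hw : IsGrandDyck n w) (h : w'.Perm w) :
    IsGrandDyck n w' :=
  ⟨h.length_eq.trans hw.1, (h.count_eq _).trans hw.2⟩

lemma covers_iff_exists_raiseAt_of_ordConnected {n : ℕ} {P : List Step → Prop}
    (hP : ∀ z, P z → IsGrandDyck n z)
    (hconv : ∀ a b c, P a → P c → IsGrandDyck n b → PathLe a b → PathLe b c → P b)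
    {γ w : List Step} (hγ : P γ) :
    Covers P γ w ↔
      ∃ i, γ[i]? = some .D ∧ γ[i + 1]? = some .U ∧ P (raiseAt γ i) ∧ raiseAt γ i = w := by
  constructor
  · rintro ⟨-, hw, ⟨hle, hnle⟩, hmin⟩
    have hγ' := hP γ hγ
    have hw' := hP w hw
    obtain ⟨i, hD, hU, hrw⟩ := exists_valley_pathLe_raiseAt (hγ'.1.trans hw'.1.symm)
      (hγ'.2.trans hw'.2.symm) hle (by rintro rfl; exact hnle hle)
    have hr := pathLt_raiseAt hD hU
    have hgr : IsGrandDyck n (raiseAt γ i) := hγ'.of_perm (take_append_cons_cons_drop_perm hD hU)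
    have hPr := hconv _ _ _ hγ hw hgr hr.1 hrw
    refine ⟨i, hD, hU, hPr, hrw.antisymm ?_ (hgr.1.trans hw'.1.symm)⟩
    by_contra h
    exact hmin _ hPr ⟨hr, hrw, h⟩
  · rintro ⟨i, hD, hU, hPr, rfl⟩
    refine ⟨hγ, hPr, pathLt_raiseAt hD hU, fun z hz ⟨⟨hγz, hzγ⟩, hzr, hrz⟩ => ?_⟩
    have hlen : z.length = γ.length := (hP z hz).1.trans (hP γ hγ).1.symm
    exact (pathLe_or_pathLe_of_pathLe_raiseAt hD hU hlen hγz hzr).elim hzγ hrz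

lemma covers_map_flip {P : List Step → Prop} {w w' : List Step} :
    Covers (fun z => P (z.map Step.flip)) (w'.map Step.flip) (w.map Step.flip) ↔ Covers P w w' := by
  have hinv := Step.flip_involutive.list_map
  have hlt : ∀ {a b : List Step}, PathLt (a.map Step.flip) (b.map Step.flip) ↔ PathLt b a :=
    by simp [PathLt, pathLe_map_flip]
  have hbetween : (∀ z, P (z.map Step.flip) →
      ¬(PathLt (w'.map Step.flip) z ∧ PathLt z (w.map Step.flip))) ↔
      ∀ z, P z → ¬(PathLt w z ∧ PathLt z w') := by
    rw [hinv.surjective.forall]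
    simp only [hinv _, hlt, and_comm]
  simp only [Covers, hinv _, hlt, hbetween]
  tauto

lemma getElem?_map_flip_eq_some {w : List Step} {i : ℕ} {s : Step} :
    (w.map Step.flip)[i]? = some s ↔ w[i]? = some s.flip := by
  rw [List.getElem?_map]
  rcases w[i]? with _ | a
  · simp
  · simp [Step.flip_involutive.eq_iff]

lemma height_take_lowerAt {w : List Step} {i : ℕ} (hU : w[i]? = some .U)
    (hD : w[i + 1]? = some .D) (k : ℕ) :
    height ((lowerAt w i).take k) = height (w.take k) - if k = i + 1 then 2 else 0 := by
  have := height_take_raiseAt (getElem?_map_flip_eq_some.2 hU) (getElem?_map_flip_eq_some.2 hD) k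
  rw [raiseAt_map_flip, ← List.map_take, ← List.map_take, height_map_flip, height_map_flip] at this
  linarith

lemma raiseAt_injOn (w : List Step) :
    Set.InjOn (raiseAt w) {i | w[i]? = some .D ∧ w[i + 1]? = some .U} := by
  rintro i ⟨hD, hU⟩ j ⟨hD', hU'⟩ h
  have := congrArg (fun u => height (u.take (i + 1))) h
  simp only [height_take_raiseAt hD hU, height_take_raiseAt hD' hU'] at this
  split_ifs at this <;> omega

lemma lowerAt_injOn (w : List Step) :
    Set.InjOn (lowerAt w) {i | w[i]? = some .U ∧ w[i + 1]? = some .D} := by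
  rintro i ⟨hU, hD⟩ j ⟨hU', hD'⟩ h
  have := congrArg (fun u => height (u.take (i + 1))) h
  simp only [height_take_lowerAt hU hD, height_take_lowerAt hU' hD'] at this
  split_ifs at this <;> omega

section Dyck

variable {n : ℕ}

lemma IsDyck.isGrandDyck {w : List Step} (h : IsDyck n w) : IsGrandDyck n w := ⟨h.1, h.2.1⟩

lemma IsDyck.of_pathLe {a b : List Step} (ha : IsDyck n a) (hb : IsGrandDyck n b)
    (hab : PathLe a b) : IsDyck n b :=
  ⟨hb.1, hb.2, fun k => (ha.2.2 k).trans (hab k)⟩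

lemma isGrandDyck_map_flip {w : List Step} : IsGrandDyck n (w.map Step.flip) ↔ IsGrandDyck n w := by
  have hD : (w.map Step.flip).count .U = w.count .D :=
    List.count_map_of_injective w _ Step.flip_involutive.injective .D
  have := count_U_add_count_D w
  simp only [IsGrandDyck, List.length_map, hD]
  omega

lemma isDyck_lowerAt_iff {γ : List Step} {i : ℕ} (hγ : IsDyck n γ) (hU : γ[i]? = some .U)
    (hD : γ[i + 1]? = some .D) : IsDyck n (lowerAt γ i) ↔ 1 ≤ height (γ.take i) := by
  have hstep := height_take_succ_of_getElem? hU
  simp only [Step.sign] at hstep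
  constructor
  · intro h
    have := h.2.2 (i + 1)
    rw [height_take_lowerAt hU hD, if_pos rfl] at this
    linarith
  · intro h
    have hg := hγ.isGrandDyck.of_perm (take_append_cons_cons_drop_perm hU hD)
    refine ⟨hg.1, hg.2, fun k => ?_⟩
    rw [height_take_lowerAt hU hD]
    split_ifs with hk
    · subst hk; linarith
    · simpa using hγ.2.2 k

lemma covers_isDyck_iff_exists_raiseAt {γ w : List Step} (hγ : IsDyck n γ) :
    Covers (IsDyck n) γ w ↔ ∃ i, γ[i]? = some .D ∧ γ[i + 1]? = some .U ∧ raiseAt γ i = w := by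
  rw [covers_iff_exists_raiseAt_of_ordConnected (fun z hz => hz.isGrandDyck)
    (fun a b c ha _ hb hab _ => ha.of_pathLe hb hab) hγ]
  refine exists_congr fun i => and_congr_right fun hD => and_congr_right fun hU => ?_
  have hgr := hγ.isGrandDyck.of_perm (take_append_cons_cons_drop_perm hD hU)
  exact and_iff_right (hγ.of_pathLe hgr (pathLt_raiseAt hD hU).1)

lemma covers_isDyck_iff_exists_lowerAt {γ w : List Step} (hγ : IsDyck n γ) :
    Covers (IsDyck n) w γ ↔
      ∃ i, γ[i]? = some .U ∧ γ[i + 1]? = some .D ∧ 1 ≤ height (γ.take i) ∧ lowerAt γ i = w := by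
  have hinv := Step.flip_involutive.list_map
  rw [← covers_map_flip,
    covers_iff_exists_raiseAt_of_ordConnected (P := fun z => IsDyck n (z.map Step.flip))
    (fun z hz => isGrandDyck_map_flip.1 hz.isGrandDyck)
    (fun _ b _ _ hc hb _ hbc => hc.of_pathLe (isGrandDyck_map_flip.2 hb) (pathLe_map_flip.2 hbc))
    (by rwa [hinv])]
  simp only [getElem?_map_flip_eq_some, raiseAt_map_flip, hinv _, hinv.injective.eq_iff]
  exact exists_congr fun i => and_congr_right fun hU => and_congr_right fun hD => by
    rw [isDyck_lowerAt_iff hγ hU hD]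

end Dyck

lemma natCard_subtype_eq_card_of_injOn {α β : Type*} {p : β → Prop} {s : Finset α} {f : α → β}
    (hf : Set.InjOn f s) (hp : ∀ b, p b ↔ ∃ a ∈ s, f a = b) : Nat.card {b // p b} = s.card := by
  have hs : {b | p b} = f '' s := by ext b; simp [hp]
  rw [← Set.ncard_coe_finset, ← Nat.card_coe_set_eq, ← Nat.card_image_of_injOn hf, ← hs]
  rfl

/-- In the Dyck lattice `D_n`, the number of paths covering a Dyck path `γ` equals the
number of valleys `DU` of `γ`, and the number of paths covered by `γ` equals the number
of peaks `UD` of `γ` with starting height at least `1` (peaks not on the `x`-axis). -/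
theorem dyck_delta_nabla (n : ℕ) (γ : List Step) (hγ : IsDyck n γ) :
    Nat.card {w : List Step // Covers (IsDyck n) γ w} = countFactor Step.D Step.U γ ∧
    Nat.card {w : List Step // Covers (IsDyck n) w γ} = countFactorHigh Step.U Step.D γ := by
  have lt_length {i : ℕ} {s : Step} (h : γ[i]? = some s) : i < γ.length :=
    (List.getElem?_eq_some_iff.1 h).1
  constructor
  · refine natCard_subtype_eq_card_of_injOn
      ((raiseAt_injOn γ).mono fun i hi => (Finset.mem_filter.1 hi).2) fun w => ?_
    simp only [covers_isDyck_iff_exists_raiseAt hγ, Finset.mem_filter, Finset.mem_range, and_assoc]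
    exact exists_congr fun i => (and_iff_right_of_imp fun h => lt_length h.1).symm
  · refine natCard_subtype_eq_card_of_injOn
      ((lowerAt_injOn γ).mono fun i hi => (Finset.mem_filter.1 hi).2.imp_right And.left)
      fun w => ?_
    simp only [covers_isDyck_iff_exists_lowerAt hγ, Finset.mem_filter, Finset.mem_range, and_assoc]
    exact exists_congr fun i => (and_iff_right_of_imp fun h => lt_length h.1).symm
end

section
/- For all natural numbers m, n ≥ 1, the number ℓ(L(m,n)) of covering pairs in the poset L(m,n) of Young diagrams contained in the m×n rectangle equals n · C(m+n−1, n) = (m+n−1)!/((m−1)!·(n−1)!). -/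
/-- `μ` is contained in the `m × n` rectangle: all its cells `(i,j)` satisfy
`i < m` and `j < n` (at most `m` rows, each of length at most `n`). -/
def InRect (m n : ℕ) (μ : YoungDiagram) : Prop :=
  ∀ c ∈ μ.cells, c.1 < m ∧ c.2 < n

/-- The number of edges of the Hasse diagram of the Young lattice `L(m,n)` of Young
diagrams contained in the `m × n` rectangle, i.e. the number of covering pairs of
Young diagrams both contained in the rectangle. -/
noncomputable def rectEdges (m n : ℕ) : ℕ :=
  Nat.card {p : YoungDiagram × YoungDiagram //
    InRect m n p.1 ∧ InRect m n p.2 ∧ p.1 ⋖ p.2}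

open Finset

namespace RectEdgesAux

lemma rowLen_eq_of_iff {μ : YoungDiagram} {i t : ℕ} (h : ∀ j, (i, j) ∈ μ ↔ j < t) :
    μ.rowLen i = t := by
  refine le_antisymm ?_ ?_
  · by_contra hc
    push_neg at hc
    exact lt_irrefl t ((h t).1 (YoungDiagram.mem_iff_lt_rowLen.2 hc))
  · by_contra hc
    push_neg at hc
    exact lt_irrefl _ (YoungDiagram.mem_iff_lt_rowLen.1 ((h _).2 hc))

lemma yd_lt_iff {μ ν : YoungDiagram} : μ < ν ↔ μ.cells ⊂ ν.cells := by
  rw [lt_iff_le_and_ne, Finset.ssubset_iff_subset_ne]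
  refine and_congr Iff.rfl ?_
  simp only [ne_eq, not_iff_not]
  exact ⟨fun h => by rw [h], fun h => YoungDiagram.ext_iff.2 (by simp [h])⟩

/-- Characterization of covering pairs of Young diagrams: `ν` is obtained from `μ`
by inserting a single cell. -/
lemma covBy_iff_insert {μ ν : YoungDiagram} :
    μ ⋖ ν ↔ ∃ c, c ∉ μ ∧ ν.cells = insert c μ.cells := by
  constructor
  · rintro ⟨hlt, hmax⟩
    have hsub : μ.cells ⊆ ν.cells := (yd_lt_iff.1 hlt).1
    have hne : (ν.cells \ μ.cells).Nonempty := by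
      rw [Finset.sdiff_nonempty]
      exact fun hc => (yd_lt_iff.1 hlt).2 hc
    obtain ⟨c, hc, hmin⟩ := Finset.exists_min_image _ (fun c => c.1 + c.2) hne
    obtain ⟨i, j⟩ := c
    rw [Finset.mem_sdiff] at hc
    have key : ∀ a b : ℕ, a + b < i + j → a ≤ i → b ≤ j → (a, b) ∈ μ.cells := by
      intro a b hab ha hb
      have hν : (a, b) ∈ ν.cells :=
        ν.isLowerSet (Prod.mk_le_mk.2 ⟨ha, hb⟩) (Finset.mem_coe.2 hc.1)
      by_contra hμ
      have hmem : (a, b) ∈ ν.cells \ μ.cells := Finset.mem_sdiff.2 ⟨hν, hμ⟩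
      exact absurd (hmin _ hmem) (by omega)
    have hlow : IsLowerSet (↑(insert (i, j) μ.cells) : Set (ℕ × ℕ)) := by
      rintro ⟨b1, b2⟩ ⟨a1, a2⟩ hab hb
      obtain ⟨h1, h2⟩ := Prod.mk_le_mk.1 hab
      simp only [Finset.coe_insert, Set.mem_insert_iff, Finset.mem_coe] at hb ⊢
      rcases hb with hb | hb
      · obtain ⟨e1, e2⟩ : b1 = i ∧ b2 = j := by simpa [Prod.ext_iff] using hb
        rw [e1] at h1; rw [e2] at h2
        by_cases heq : (a1, a2) = (i, j)
        · exact Or.inl heq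
        · right
          have hlt' : a1 < i ∨ a2 < j := by
            rcases Nat.lt_or_ge a1 i with h | h
            · exact Or.inl h
            · rcases Nat.lt_or_ge a2 j with h' | h'
              · exact Or.inr h'
              · exact absurd (by omega : a1 = i ∧ a2 = j) (by simpa [Prod.ext_iff] using heq)
          rcases hlt' with h | h
          · have : (i - 1, j) ∈ μ.cells := key (i - 1) j (by omega) (by omega) le_rfl
            exact μ.isLowerSet (Prod.mk_le_mk.2 ⟨by omega, h2⟩) (Finset.mem_coe.2 this)
          · have : (i, j - 1) ∈ μ.cells := key i (j - 1) (by omega) le_rfl (by omega)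
            exact μ.isLowerSet (Prod.mk_le_mk.2 ⟨h1, by omega⟩) (Finset.mem_coe.2 this)
      · exact Or.inr (μ.isLowerSet hab (Finset.mem_coe.2 hb))
    set ν' : YoungDiagram := ⟨insert (i, j) μ.cells, hlow⟩ with hν'
    have h1 : μ < ν' := yd_lt_iff.2 (Finset.ssubset_insert hc.2)
    have h2 : ν' ≤ ν := by
      rw [← YoungDiagram.cells_subset_iff]
      exact Finset.insert_subset hc.1 hsub
    have : ν' = ν := by
      rcases lt_or_eq_of_le h2 with h | h
      · exact absurd h (hmax h1)
      · exact h
    refine ⟨(i, j), fun hmem => hc.2 ((YoungDiagram.mem_cells _).1 hmem), ?_⟩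
    rw [← this]
  · rintro ⟨c, hc, hins⟩
    have hcells : c ∉ μ.cells := fun h => hc ((YoungDiagram.mem_cells _).2 h)
    have hlt : μ < ν := yd_lt_iff.2 (by rw [hins]; exact Finset.ssubset_insert hcells)
    refine ⟨hlt, fun ρ h1 h2 => ?_⟩
    have c1 := Finset.card_lt_card (yd_lt_iff.1 h1)
    have c2 := Finset.card_lt_card (yd_lt_iff.1 h2)
    rw [hins, Finset.card_insert_of_notMem hcells] at c2
    omega



/-- Young diagram with row lengths given by an antitone function. -/
def diagramOf (m n : ℕ) (f : ℕ → ℕ) (hf : Antitone f) : YoungDiagram where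
  cells := ((Finset.range m) ×ˢ (Finset.range n)).filter fun c => c.2 < f c.1
  isLowerSet := by
    rintro ⟨b1, b2⟩ ⟨a1, a2⟩ hab hb
    obtain ⟨h1, h2⟩ := Prod.mk_le_mk.1 hab
    simp only [Finset.coe_filter, Set.mem_setOf_eq, Finset.mem_product, Finset.mem_range] at hb ⊢
    exact ⟨⟨lt_of_le_of_lt h1 hb.1.1, lt_of_le_of_lt h2 hb.1.2⟩,
      lt_of_le_of_lt h2 (lt_of_lt_of_le hb.2 (hf h1))⟩

lemma mem_diagramOf {m n : ℕ} {f : ℕ → ℕ} {hf : Antitone f}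
    (hn : ∀ i, f i ≤ n) (hm : ∀ i, m ≤ i → f i = 0) {i j : ℕ} :
    (i, j) ∈ diagramOf m n f hf ↔ j < f i := by
  show (i, j) ∈ ((Finset.range m) ×ˢ (Finset.range n)).filter _ ↔ _
  simp only [Finset.mem_filter, Finset.mem_product, Finset.mem_range]
  constructor
  · exact fun h => h.2
  · intro h
    have him : i < m := by
      by_contra hc
      push_neg at hc
      rw [hm i hc] at h; omega
    exact ⟨⟨him, lt_of_lt_of_le h (hn i)⟩, h⟩

lemma rowLen_diagramOf {m n : ℕ} {f : ℕ → ℕ} {hf : Antitone f}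
    (hn : ∀ i, f i ≤ n) (hm : ∀ i, m ≤ i → f i = 0) (i : ℕ) :
    (diagramOf m n f hf).rowLen i = f i :=
  rowLen_eq_of_iff fun _ => mem_diagramOf hn hm

lemma inRect_diagramOf {m n : ℕ} {f : ℕ → ℕ} {hf : Antitone f} :
    InRect m n (diagramOf m n f hf) := by
  intro c hc
  have : c ∈ ((Finset.range m) ×ˢ (Finset.range n)).filter fun c => c.2 < f c.1 := hc
  simp only [Finset.mem_filter, Finset.mem_product, Finset.mem_range] at this
  exact this.1

lemma rowLen_le_of_inRect {m n : ℕ} {μ : YoungDiagram} (h : InRect m n μ) (i : ℕ) :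
    μ.rowLen i ≤ n := by
  by_contra hc
  push_neg at hc
  exact absurd (h (i, n) ((YoungDiagram.mem_cells _).2 (YoungDiagram.mem_iff_lt_rowLen.2 hc))).2
    (lt_irrefl n)

lemma rowLen_eq_zero_of_inRect {m n : ℕ} {μ : YoungDiagram} (h : InRect m n μ) {i : ℕ}
    (hi : m ≤ i) : μ.rowLen i = 0 := by
  by_contra hc
  have : (i, 0) ∈ μ := YoungDiagram.mem_iff_lt_rowLen.2 (Nat.pos_of_ne_zero hc)
  exact absurd (h (i, 0) ((YoungDiagram.mem_cells _).2 this)).1 (by omega)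


section cellStructure

variable {μ ν : YoungDiagram} {i j : ℕ}

lemma mem_nu_iff (hins : ν.cells = insert (i, j) μ.cells) (a b : ℕ) :
    (a, b) ∈ ν ↔ ((a, b) = (i, j) ∨ (a, b) ∈ μ) := by
  rw [← YoungDiagram.mem_cells, hins, Finset.mem_insert, YoungDiagram.mem_cells]

variable (hc : (i, j) ∉ μ) (hins : ν.cells = insert (i, j) μ.cells)
include hc hins

lemma rowLen_base : μ.rowLen i = j := by
  apply rowLen_eq_of_iff
  intro j'
  constructor
  · intro h
    by_contra hle
    push_neg at hle
    exact hc (μ.isLowerSet (Prod.mk_le_mk.2 ⟨le_rfl, hle⟩) h)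
  · intro h
    have hij : (i, j) ∈ ν := (mem_nu_iff hins i j).2 (Or.inl rfl)
    have h2 : (i, j') ∈ ν := ν.isLowerSet (Prod.mk_le_mk.2 ⟨le_rfl, le_of_lt h⟩) hij
    rcases (mem_nu_iff hins i j').1 h2 with h3 | h3
    · exact absurd (by simpa [Prod.ext_iff] using h3) (by omega)
    · exact h3

lemma rowLen_top : ν.rowLen i = j + 1 := by
  apply rowLen_eq_of_iff
  intro j'
  rw [mem_nu_iff hins]
  constructor
  · rintro (h | h)
    · simp only [Prod.mk.injEq] at h
      omega
    · have := YoungDiagram.mem_iff_lt_rowLen.1 h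
      rw [rowLen_base hc hins] at this
      omega
  · intro h
    rcases Nat.lt_succ_iff_lt_or_eq.1 h with h' | h'
    · exact Or.inr (YoungDiagram.mem_iff_lt_rowLen.2 (by rw [rowLen_base hc hins]; exact h'))
    · exact Or.inl (by rw [h'])

lemma rowLen_other {i' : ℕ} (hi' : i' ≠ i) : ν.rowLen i' = μ.rowLen i' := by
  apply rowLen_eq_of_iff
  intro j'
  rw [mem_nu_iff hins, ← YoungDiagram.mem_iff_lt_rowLen]
  constructor
  · rintro (h | h)
    · exact absurd (congrArg Prod.fst h) hi'
    · exact h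
  · exact Or.inr

lemma rowLen_above {i' : ℕ} (hi' : i' < i) : j < μ.rowLen i' := by
  have hij : (i, j) ∈ ν := (mem_nu_iff hins i j).2 (Or.inl rfl)
  have h2 : (i', j) ∈ ν := ν.isLowerSet (Prod.mk_le_mk.2 ⟨le_of_lt hi', le_rfl⟩) hij
  rcases (mem_nu_iff hins i' j).1 h2 with h3 | h3
  · exact absurd (congrArg Prod.fst h3) (by simp; omega)
  · exact YoungDiagram.mem_iff_lt_rowLen.1 h3

end cellStructure


section part3

lemma strictMono_le_apply' {m : ℕ} {s : Fin m → ℕ} (hs : StrictMono s) :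
    ∀ v, ∀ hv : v < m, v ≤ s ⟨v, hv⟩ := by
  intro v
  induction v with
  | zero => intro hv; exact Nat.zero_le _
  | succ v ih =>
    intro hv
    have h1 : s ⟨v, by omega⟩ < s ⟨v + 1, hv⟩ := hs (by simp [Fin.lt_def])
    have h2 := ih (by omega)
    omega

lemma strictMono_add_le {m : ℕ} {s : Fin m → ℕ} (hs : StrictMono s) :
    ∀ d v, ∀ hv : v + d < m, s ⟨v, by omega⟩ + d ≤ s ⟨v + d, hv⟩ := by
  intro d
  induction d with
  | zero => intro v hv; simp
  | succ d ih =>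
    intro v hv
    have h1 := ih v (by omega)
    have h2 : s ⟨v + d, by omega⟩ < s ⟨v + (d + 1), hv⟩ := hs (by simp [Fin.lt_def])
    omega

/-- The row-length function extracted from an `m`-element subset `S ⊆ [0, m+n)`. -/
def fOf (m : ℕ) (S : Finset ℕ) (hcard : S.card = m) : ℕ → ℕ := fun i =>
  if h : i < m then S.orderEmbOfFin hcard ⟨m - 1 - i, by omega⟩ - (m - 1 - i) else 0

lemma fOf_lt {m : ℕ} {S : Finset ℕ} (hcard : S.card = m) {i : ℕ} (h : i < m) :
    fOf m S hcard i = S.orderEmbOfFin hcard ⟨m - 1 - i, by omega⟩ - (m - 1 - i) :=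
  dif_pos h

lemma fOf_ge {m : ℕ} {S : Finset ℕ} (hcard : S.card = m) {i : ℕ} (h : m ≤ i) :
    fOf m S hcard i = 0 :=
  dif_neg (by omega)

/-- `fOf` recovers the subset: `emb k = fOf (m-1-k) + k`. -/
lemma fOf_emb {m : ℕ} {S : Finset ℕ} (hcard : S.card = m) (k : Fin m) :
    fOf m S hcard (m - 1 - (k : ℕ)) + (k : ℕ) = S.orderEmbOfFin hcard k := by
  have hk : (k : ℕ) < m := k.2
  have h1 : m - 1 - (m - 1 - (k : ℕ)) = (k : ℕ) := by omega
  rw [fOf_lt hcard (by omega : m - 1 - (k : ℕ) < m)]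
  have he : (⟨m - 1 - (m - 1 - (k : ℕ)), by omega⟩ : Fin m) = k := Fin.ext (by simpa using h1)
  rw [he]
  have := strictMono_le_apply' (S.orderEmbOfFin hcard).strictMono (k : ℕ) hk
  rw [Fin.eta] at this
  omega

lemma fOf_antitone {m : ℕ} {S : Finset ℕ} (hcard : S.card = m) : Antitone (fOf m S hcard) := by
  intro i i' hii'
  by_cases h' : i' < m
  · have h : i < m := by omega
    rw [fOf_lt hcard h, fOf_lt hcard h']
    set s := S.orderEmbOfFin hcard with hs
    have hmono := s.strictMono
    have hle := strictMono_add_le hmono ((m - 1 - i) - (m - 1 - i')) (m - 1 - i')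
      (by omega : (m - 1 - i') + ((m - 1 - i) - (m - 1 - i')) < m)
    have heq : (⟨(m - 1 - i') + ((m - 1 - i) - (m - 1 - i')), by omega⟩ : Fin m)
        = ⟨m - 1 - i, by omega⟩ := Fin.ext (by simp; omega)
    rw [heq] at hle
    have := strictMono_le_apply' hmono (m - 1 - i') (by omega)
    omega
  · rw [fOf_ge hcard (by omega)]
    exact Nat.zero_le _

lemma fOf_le {m n : ℕ} {S : Finset ℕ} (hcard : S.card = m)
    (hsub : S ⊆ Finset.range (m + n)) (i : ℕ) : fOf m S hcard i ≤ n := by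
  by_cases h : i < m
  · rw [fOf_lt hcard h]
    have hq : m - 1 - i < m := by omega
    show S.orderEmbOfFin hcard ⟨m - 1 - i, hq⟩ - (m - 1 - i) ≤ n
    have hvv : m - 1 - i + i < m := by omega
    have htop : S.orderEmbOfFin hcard ⟨m - 1 - i, hq⟩ + i
        ≤ S.orderEmbOfFin hcard ⟨m - 1 - i + i, hvv⟩ :=
      strictMono_add_le (S.orderEmbOfFin hcard).strictMono i (m - 1 - i) hvv
    have hmem : S.orderEmbOfFin hcard ⟨m - 1 - i + i, hvv⟩ ∈ S := Finset.orderEmbOfFin_mem _ _ _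
    have h2 := Finset.mem_range.1 (hsub hmem)
    have hge := strictMono_le_apply' (S.orderEmbOfFin hcard).strictMono (m - 1 - i) hq
    omega
  · rw [fOf_ge hcard (by omega)]
    exact Nat.zero_le _

end part3


section part4

variable {m n : ℕ} {S : Finset ℕ} {a : ℕ}

/-- Index of `a` in `S`. -/
def kIdx (hcard : S.card = m) (haS : a ∈ S) : Fin m :=
  (S.orderIsoOfFin hcard).symm ⟨a, haS⟩

lemma emb_kIdx (hcard : S.card = m) (haS : a ∈ S) :
    S.orderEmbOfFin hcard (kIdx hcard haS) = a := by
  rw [kIdx, ← Finset.coe_orderIsoOfFin_apply, OrderIso.apply_symm_apply]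

/-- The marked row. -/
def iIdx (hcard : S.card = m) (haS : a ∈ S) : ℕ := m - 1 - (kIdx hcard haS : ℕ)

/-- The marked column. -/
def jVal (hcard : S.card = m) (haS : a ∈ S) : ℕ := fOf m S hcard (iIdx hcard haS)

lemma m_pos (hcard : S.card = m) (haS : a ∈ S) : 0 < m :=
  (kIdx hcard haS).pos

lemma iIdx_lt (hcard : S.card = m) (haS : a ∈ S) : iIdx hcard haS < m := by
  have := m_pos hcard haS
  rw [iIdx]; omega

lemma jVal_add (hcard : S.card = m) (haS : a ∈ S) :
    jVal hcard haS + (kIdx hcard haS : ℕ) = a := by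
  have h := fOf_emb hcard (kIdx hcard haS)
  rw [emb_kIdx hcard haS] at h
  exact h

lemma gap_lemma (hcard : S.card = m) (haS : a ∈ S) (ha1 : a + 1 ∉ S) :
    ∀ i' < iIdx hcard haS, jVal hcard haS + 1 ≤ fOf m S hcard i' := by
  intro i' hi'
  set k0 : ℕ := (kIdx hcard haS : ℕ) with hk0
  have hk0m : k0 < m := (kIdx hcard haS).2
  have hiIdx : iIdx hcard haS = m - 1 - k0 := by rw [iIdx, hk0]
  have hi'm : i' < m := by omega
  have hk1 : k0 + 1 < m := by omega
  -- emb (k0+1) ≥ a + 2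
  have h1 : S.orderEmbOfFin hcard ⟨k0, hk0m⟩ < S.orderEmbOfFin hcard ⟨k0 + 1, hk1⟩ :=
    (S.orderEmbOfFin hcard).strictMono (by simp [Fin.lt_def])
  have h1' : S.orderEmbOfFin hcard ⟨k0, hk0m⟩ = a := by
    have : (⟨k0, hk0m⟩ : Fin m) = kIdx hcard haS := Fin.ext hk0
    rw [this]; exact emb_kIdx hcard haS
  have h2 : S.orderEmbOfFin hcard ⟨k0 + 1, hk1⟩ ≠ a + 1 := by
    intro h
    exact ha1 (h ▸ Finset.orderEmbOfFin_mem _ _ _)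
  have h3 : a + 2 ≤ S.orderEmbOfFin hcard ⟨k0 + 1, hk1⟩ := by omega
  -- emb (m-1-i') ≥ emb (k0+1) + gap
  have hvv : k0 + 1 + (m - 1 - i' - (k0 + 1)) < m := by omega
  have h4 : S.orderEmbOfFin hcard ⟨k0 + 1, hk1⟩ + (m - 1 - i' - (k0 + 1))
      ≤ S.orderEmbOfFin hcard ⟨k0 + 1 + (m - 1 - i' - (k0 + 1)), hvv⟩ :=
    strictMono_add_le (S.orderEmbOfFin hcard).strictMono _ _ hvv
  have h5 : (⟨k0 + 1 + (m - 1 - i' - (k0 + 1)), hvv⟩ : Fin m)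
      = ⟨m - 1 - i', by omega⟩ := Fin.ext (by simp; omega)
  rw [h5] at h4
  -- fOf i' in terms of emb (m-1-i')
  have h6 : fOf m S hcard i' + (m - 1 - i')
      = S.orderEmbOfFin hcard ⟨m - 1 - i', by omega⟩ := by
    have h6' := fOf_emb hcard (⟨m - 1 - i', by omega⟩ : Fin m)
    simpa [show m - 1 - (m - 1 - i') = i' from by omega] using h6'
  have h7 := jVal_add hcard haS
  simp only [← hk0] at h7
  omega

lemma jVal_lt (hcard : S.card = m) (haS : a ∈ S) (ha1 : a + 1 ∉ S)
    (haN : a + 1 < m + n) (hsub : S ⊆ Finset.range (m + n)) :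
    jVal hcard haS < n := by
  set k0 : ℕ := (kIdx hcard haS : ℕ) with hk0
  have hk0m : k0 < m := (kIdx hcard haS).2
  have h7 := jVal_add hcard haS
  simp only [← hk0] at h7
  by_cases hk : k0 = m - 1
  · omega
  · have hgap := gap_lemma hcard haS ha1 (iIdx hcard haS - 1) (by rw [iIdx]; omega)
    have hle := fOf_le hcard hsub (iIdx hcard haS - 1)
    omega

/-- The incremented row-length function. -/
def nuF (hcard : S.card = m) (haS : a ∈ S) : ℕ → ℕ := fun i' =>
  if i' = iIdx hcard haS then jVal hcard haS + 1 else fOf m S hcard i'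

lemma nuF_antitone (hcard : S.card = m) (haS : a ∈ S) (ha1 : a + 1 ∉ S) :
    Antitone (nuF hcard haS) := by
  intro i1 i2 h12
  unfold nuF
  by_cases h1 : i1 = iIdx hcard haS <;> by_cases h2 : i2 = iIdx hcard haS <;>
    simp [h1, h2]
  · have : fOf m S hcard i2 ≤ fOf m S hcard (iIdx hcard haS) :=
      fOf_antitone hcard (h1 ▸ h12)
    rw [← jVal] at this
    omega
  · exact gap_lemma hcard haS ha1 i1 (by omega : i1 < iIdx hcard haS)
  · exact fOf_antitone hcard h12

lemma nuF_le (hcard : S.card = m) (haS : a ∈ S) (ha1 : a + 1 ∉ S)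
    (haN : a + 1 < m + n) (hsub : S ⊆ Finset.range (m + n)) (i : ℕ) :
    nuF hcard haS i ≤ n := by
  unfold nuF
  by_cases h : i = iIdx hcard haS <;> simp [h]
  · exact jVal_lt hcard haS ha1 haN hsub
  · exact fOf_le hcard hsub i

lemma nuF_zero (hcard : S.card = m) (haS : a ∈ S) {i : ℕ} (hi : m ≤ i) :
    nuF hcard haS i = 0 := by
  unfold nuF
  rw [if_neg (by have := iIdx_lt hcard haS; omega), fOf_ge hcard hi]

end part4


section part5

variable {m n : ℕ}

lemma yd_ext_rowLen {μ ν : YoungDiagram} (h : ∀ i, μ.rowLen i = ν.rowLen i) : μ = ν := by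
  ext ⟨x, y⟩
  rw [YoungDiagram.mem_cells, YoungDiagram.mem_cells, YoungDiagram.mem_iff_lt_rowLen,
    YoungDiagram.mem_iff_lt_rowLen, h]

def muOf (m n : ℕ) (S : Finset ℕ) (hcard : S.card = m) : YoungDiagram :=
  diagramOf m n (fOf m S hcard) (fOf_antitone hcard)

def nuOf (m n : ℕ) (S : Finset ℕ) (hcard : S.card = m) (a : ℕ) (haS : a ∈ S)
    (ha1 : a + 1 ∉ S) : YoungDiagram :=
  diagramOf m n (nuF hcard haS) (nuF_antitone hcard haS ha1)

variable {S : Finset ℕ} {a : ℕ}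

lemma rowLen_muOf (hcard : S.card = m) (hsub : S ⊆ Finset.range (m + n)) (i : ℕ) :
    (muOf m n S hcard).rowLen i = fOf m S hcard i :=
  rowLen_diagramOf (fOf_le hcard hsub) (fun _ h => fOf_ge hcard h) i

lemma rowLen_nuOf (hcard : S.card = m) (haS : a ∈ S) (ha1 : a + 1 ∉ S)
    (haN : a + 1 < m + n) (hsub : S ⊆ Finset.range (m + n)) (i : ℕ) :
    (nuOf m n S hcard a haS ha1).rowLen i = nuF hcard haS i :=
  rowLen_diagramOf (nuF_le hcard haS ha1 haN hsub) (fun _ h => nuF_zero hcard haS h) i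

lemma nuOf_cells (hcard : S.card = m) (haS : a ∈ S) (ha1 : a + 1 ∉ S)
    (haN : a + 1 < m + n) (hsub : S ⊆ Finset.range (m + n)) :
    (nuOf m n S hcard a haS ha1).cells
      = insert (iIdx hcard haS, jVal hcard haS) (muOf m n S hcard).cells := by
  ext ⟨x, y⟩
  rw [Finset.mem_insert, YoungDiagram.mem_cells, YoungDiagram.mem_cells]
  rw [show nuOf m n S hcard a haS ha1 = diagramOf m n (nuF hcard haS)
        (nuF_antitone hcard haS ha1) from rfl,
      show muOf m n S hcard = diagramOf m n (fOf m S hcard) (fOf_antitone hcard) from rfl]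
  rw [mem_diagramOf (nuF_le hcard haS ha1 haN hsub) (fun _ h => nuF_zero hcard haS h),
      mem_diagramOf (fOf_le hcard hsub) (fun _ h => fOf_ge hcard h)]
  unfold nuF
  by_cases hx : x = iIdx hcard haS
  · subst hx
    rw [if_pos rfl]
    simp only [Prod.mk.injEq, true_and]
    show y < jVal hcard haS + 1 ↔ (y = jVal hcard haS ∨ y < fOf m S hcard (iIdx hcard haS))
    rw [show fOf m S hcard (iIdx hcard haS) = jVal hcard haS from rfl]
    omega
  · rw [if_neg hx]
    simp only [Prod.mk.injEq]
    have : ¬(x = iIdx hcard haS ∧ y = jVal hcard haS) := fun h => hx h.1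
    tauto

lemma notMem_muOf (hcard : S.card = m) (haS : a ∈ S)
    (hsub : S ⊆ Finset.range (m + n)) :
    (iIdx hcard haS, jVal hcard haS) ∉ muOf m n S hcard := by
  rw [show muOf m n S hcard = diagramOf m n (fOf m S hcard) (fOf_antitone hcard) from rfl,
    mem_diagramOf (fOf_le hcard hsub) (fun _ h => fOf_ge hcard h)]
  exact lt_irrefl _

lemma cov_muOf_nuOf (hcard : S.card = m) (haS : a ∈ S) (ha1 : a + 1 ∉ S)
    (haN : a + 1 < m + n) (hsub : S ⊆ Finset.range (m + n)) :
    muOf m n S hcard ⋖ nuOf m n S hcard a haS ha1 :=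
  covBy_iff_insert.2 ⟨(iIdx hcard haS, jVal hcard haS),
    notMem_muOf hcard haS hsub, nuOf_cells hcard haS ha1 haN hsub⟩

def AType (m n : ℕ) :=
  {p : YoungDiagram × YoungDiagram // InRect m n p.1 ∧ InRect m n p.2 ∧ p.1 ⋖ p.2}

def BType (m n : ℕ) :=
  {q : Finset ℕ × ℕ // q.1 ⊆ Finset.range (m + n) ∧ q.1.card = m ∧ q.2 ∈ q.1 ∧
    q.2 + 1 ∉ q.1 ∧ q.2 + 1 < m + n}

lemma inRect_muOf (hcard : S.card = m) : InRect m n (muOf m n S hcard) :=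
  inRect_diagramOf (f := fOf m S hcard) (hf := fOf_antitone hcard)

lemma inRect_nuOf (hcard : S.card = m) (haS : a ∈ S) (ha1 : a + 1 ∉ S) :
    InRect m n (nuOf m n S hcard a haS ha1) :=
  inRect_diagramOf (f := nuF hcard haS) (hf := nuF_antitone hcard haS ha1)

def gmap (m n : ℕ) (p : BType m n) : AType m n :=
  ⟨(muOf m n p.1.1 p.2.2.1,
    nuOf m n p.1.1 p.2.2.1 p.1.2 p.2.2.2.1 p.2.2.2.2.1),
   inRect_muOf p.2.2.1, inRect_nuOf p.2.2.1 p.2.2.2.1 p.2.2.2.2.1,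
   cov_muOf_nuOf p.2.2.1 p.2.2.2.1 p.2.2.2.2.1 p.2.2.2.2.2 p.2.1⟩

lemma gmap_injective : Function.Injective (gmap m n) := by
  rintro ⟨⟨S, a⟩, hsub, hcard, haS, ha1, haN⟩ ⟨⟨S', a'⟩, hsub', hcard', haS', ha1', haN'⟩ h
  have h1 : muOf m n S hcard = muOf m n S' hcard' :=
    congrArg (fun x : AType m n => x.val.1) h
  have h2 : nuOf m n S hcard a haS ha1 = nuOf m n S' hcard' a' haS' ha1' :=
    congrArg (fun x : AType m n => x.val.2) h
  have hf : ∀ i, fOf m S hcard i = fOf m S' hcard' i := fun i => by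
    rw [← rowLen_muOf hcard hsub i, ← rowLen_muOf hcard' hsub' i, h1]
  have hemb : ∀ k : Fin m, S.orderEmbOfFin hcard k = S'.orderEmbOfFin hcard' k := fun k => by
    rw [← fOf_emb hcard k, ← fOf_emb hcard' k, hf]
  have hSS : S = S' := by
    apply Finset.coe_injective
    rw [← Finset.range_orderEmbOfFin S hcard, ← Finset.range_orderEmbOfFin S' hcard']
    exact congrArg Set.range (funext hemb)
  subst hSS
  have hcc : hcard' = hcard := Subsingleton.elim _ _
  subst hcc
  have hr : ∀ i, nuF hcard' haS i = nuF hcard' haS' i := fun i => by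
    rw [← rowLen_nuOf hcard' haS ha1 haN hsub i, ← rowLen_nuOf hcard' haS' ha1' haN' hsub i, h2]
  have hii : iIdx hcard' haS = iIdx hcard' haS' := by
    by_contra hne
    have e1 := hr (iIdx hcard' haS)
    unfold nuF at e1
    rw [if_pos rfl, if_neg (fun h => hne h)] at e1
    rw [show fOf m S hcard' (iIdx hcard' haS) = jVal hcard' haS from rfl] at e1
    omega
  have hkk : kIdx hcard' haS = kIdx hcard' haS' := by
    have b1 := (kIdx hcard' haS).2
    have b2 := (kIdx hcard' haS').2
    have := iIdx_lt hcard' haS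
    unfold iIdx at hii
    exact Fin.ext (by omega)
  have ea : S.orderEmbOfFin hcard' (kIdx hcard' haS) = a := emb_kIdx hcard' haS
  have ea' : S.orderEmbOfFin hcard' (kIdx hcard' haS') = a' := emb_kIdx hcard' haS'
  rw [hkk] at ea
  have : a = a' := ea.symm.trans ea'
  subst this
  rfl

lemma gmap_surjective : Function.Surjective (gmap m n) := by
  rintro ⟨⟨μ, ν⟩, hμ0, hν0, hcov⟩
  have hμ : InRect m n μ := hμ0
  have hν : InRect m n ν := hν0
  have hcov2 : μ ⋖ ν := hcov
  obtain ⟨⟨i, j⟩, hcmem0, hins0⟩ := covBy_iff_insert.1 hcov2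
  have hcmem : (i, j) ∉ μ := hcmem0
  have hins : ν.cells = insert (i, j) μ.cells := hins0
  have hiν : (i, j) ∈ ν := (mem_nu_iff hins i j).2 (Or.inl rfl)
  have him : i < m := (hν _ ((YoungDiagram.mem_cells _).2 hiν)).1
  have hjn : j < n := (hν _ ((YoungDiagram.mem_cells _).2 hiν)).2
  have hbase : μ.rowLen i = j := rowLen_base hcmem hins
  -- the strictly monotone enumeration
  set s : Fin m → ℕ := fun k => μ.rowLen (m - 1 - (k : ℕ)) + (k : ℕ) with hsdef
  have hsmono : StrictMono s := by
    intro k k' hkk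
    have hlt : (k : ℕ) < (k' : ℕ) := hkk
    have hanti := μ.rowLen_anti (m - 1 - (k' : ℕ)) (m - 1 - (k : ℕ)) (by omega)
    simp only [hsdef]
    omega
  set S : Finset ℕ := Finset.image s Finset.univ with hSdef
  have hcard : S.card = m := by
    rw [hSdef, Finset.card_image_of_injective _ hsmono.injective, Finset.card_univ,
      Fintype.card_fin]
  have hmemS : ∀ k : Fin m, s k ∈ S := fun k => by
    rw [hSdef]; exact Finset.mem_image_of_mem s (Finset.mem_univ k)
  have hembS : ⇑(S.orderEmbOfFin hcard) = s :=
    (Finset.orderEmbOfFin_unique hcard hmemS hsmono).symm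
  have hsub : S ⊆ Finset.range (m + n) := by
    intro x hx
    rw [hSdef] at hx
    obtain ⟨k, _, rfl⟩ := Finset.mem_image.1 hx
    have := rowLen_le_of_inRect hμ (m - 1 - (k : ℕ))
    have := k.2
    rw [Finset.mem_range]
    simp only [hsdef]
    omega
  -- the marked element
  have hks : s ⟨m - 1 - i, by omega⟩ = j + (m - 1 - i) := by
    simp only [hsdef]
    rw [show m - 1 - (m - 1 - i) = i by omega, hbase]
  have haS : j + (m - 1 - i) ∈ S := hks ▸ hmemS _
  have haN : j + (m - 1 - i) + 1 < m + n := by omega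
  have ha1 : j + (m - 1 - i) + 1 ∉ S := by
    intro hx
    rw [hSdef] at hx
    obtain ⟨k, _, hk⟩ := Finset.mem_image.1 hx
    simp only [hsdef] at hk
    rcases Nat.lt_trichotomy (k : ℕ) (m - 1 - i) with hlt | heq | hgt
    · -- rowLen (m-1-k) ≤ rowLen i = j since m-1-k ≥ i
      have hanti := μ.rowLen_anti i (m - 1 - (k : ℕ)) (by omega)
      omega
    · rw [heq, show m - 1 - (m - 1 - i) = i by omega, hbase] at hk
      omega
    · -- m-1-k < i, so rowLen (m-1-k) ≥ j+1
      have hk2 := k.2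
      have habove := rowLen_above hcmem hins (show m - 1 - (k : ℕ) < i by omega)
      omega
  refine ⟨⟨(S, j + (m - 1 - i)), hsub, hcard, haS, ha1, haN⟩, ?_⟩
  -- compute fOf = rowLen μ
  have hfOf : ∀ i', fOf m S hcard i' = μ.rowLen i' := by
    intro i'
    by_cases h : i' < m
    · rw [fOf_lt hcard h]
      have : S.orderEmbOfFin hcard ⟨m - 1 - i', by omega⟩ = s ⟨m - 1 - i', by omega⟩ := by
        rw [hembS]
      rw [this]
      simp only [hsdef]
      rw [show m - 1 - (m - 1 - i') = i' by omega]
      omega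
    · rw [fOf_ge hcard (by omega), rowLen_eq_zero_of_inRect hμ (by omega : m ≤ i')]
  have hmu : muOf m n S hcard = μ :=
    yd_ext_rowLen fun i' => by rw [rowLen_muOf hcard hsub i', hfOf i']
  -- the marked indices recover (i, j)
  have hkIdx : kIdx hcard haS = ⟨m - 1 - i, by omega⟩ := by
    apply (S.orderEmbOfFin hcard).injective
    have e1 : S.orderEmbOfFin hcard (kIdx hcard haS) = j + (m - 1 - i) := emb_kIdx hcard haS
    rw [e1, hembS, hks]
  have hiIdx : iIdx hcard haS = i := by
    rw [iIdx, hkIdx]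
    simp
    omega
  have hjVal : jVal hcard haS = j := by
    rw [jVal, hiIdx, hfOf i, hbase]
  have hnu : nuOf m n S hcard (j + (m - 1 - i)) haS ha1 = ν := by
    apply yd_ext_rowLen
    intro i'
    rw [rowLen_nuOf hcard haS ha1 haN hsub i']
    unfold nuF
    by_cases h : i' = iIdx hcard haS
    · rw [if_pos h, h, hiIdx, hjVal, rowLen_top hcmem hins]
    · rw [if_neg h, hfOf i', rowLen_other hcmem hins (by rw [hiIdx] at h; exact h)]
  exact Subtype.ext (Prod.ext hmu hnu)

end part5


section part6

variable {m n : ℕ}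

def USet (m n a : ℕ) : Finset ℕ := ((Finset.range (m + n)).erase a).erase (a + 1)

lemma USet_card {a : ℕ} (ha : a + 1 < m + n) : (USet m n a).card = m + n - 2 := by
  have h1 : a ∈ Finset.range (m + n) := Finset.mem_range.2 (by omega)
  have h2 : a + 1 ∈ (Finset.range (m + n)).erase a :=
    Finset.mem_erase.2 ⟨by omega, Finset.mem_range.2 (by omega)⟩
  rw [USet, Finset.card_erase_of_mem h2, Finset.card_erase_of_mem h1, Finset.card_range]
  omega

def bEquivSigma (hm : 1 ≤ m) :
    BType m n ≃ Σ a : Fin (m + n - 1), ((USet m n (a : ℕ)).powersetCard (m - 1) : Finset (Finset ℕ)) where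
  toFun p := ⟨⟨p.1.2, by have := p.2.2.2.2.2; omega⟩,
    ⟨p.1.1.erase p.1.2, by
      obtain ⟨hsub, hcard, haS, ha1, haN⟩ := p.2
      refine Finset.mem_powersetCard.2 ⟨?_, ?_⟩
      · intro x hx
        obtain ⟨hxa, hxS⟩ := Finset.mem_erase.1 hx
        refine Finset.mem_erase.2 ⟨fun h => ha1 (h ▸ hxS), Finset.mem_erase.2 ⟨hxa, hsub hxS⟩⟩
      · rw [Finset.card_erase_of_mem haS, hcard]⟩⟩
  invFun q := ⟨(insert (q.1 : ℕ) q.2.1, (q.1 : ℕ)), by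
    obtain ⟨hsubU, hcardT⟩ := Finset.mem_powersetCard.1 q.2.2
    have haU : (q.1 : ℕ) ∉ USet m n (q.1 : ℕ) := by
      rw [USet]
      intro h
      exact absurd (Finset.mem_erase.1 (Finset.mem_erase.1 h).2).1 (by simp)
    have ha1U : (q.1 : ℕ) + 1 ∉ USet m n (q.1 : ℕ) := by
      rw [USet]
      intro h
      exact absurd (Finset.mem_erase.1 h).1 (by simp)
    have haT : (q.1 : ℕ) ∉ q.2.1 := fun h => haU (hsubU h)
    have ha : (q.1 : ℕ) < m + n - 1 := q.1.2
    refine ⟨?_, ?_, Finset.mem_insert_self _ _, ?_, by omega⟩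
    · intro x hx
      rcases Finset.mem_insert.1 hx with rfl | hx
      · exact Finset.mem_range.2 (by omega)
      · exact (Finset.mem_erase.1 (Finset.mem_erase.1 (hsubU hx)).2).2
    · rw [Finset.card_insert_of_notMem haT, hcardT]
      omega
    · intro h
      rcases Finset.mem_insert.1 h with h | h
      · omega
      · exact ha1U (hsubU h)⟩
  left_inv p := by
    obtain ⟨⟨S, a⟩, hsub, hcard, haS, ha1, haN⟩ := p
    exact Subtype.ext (Prod.ext (Finset.insert_erase haS) rfl)
  right_inv q := by
    rcases q with ⟨a, T, hT⟩
    have haT : (a : ℕ) ∉ T := fun h => by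
      have := (Finset.mem_powersetCard.1 hT).1 h
      rw [USet] at this
      exact absurd (Finset.mem_erase.1 (Finset.mem_erase.1 this).2).1 (by simp)
    exact Sigma.ext rfl (heq_of_eq (Subtype.ext (Finset.erase_insert haT)))

lemma card_BType (hm : 1 ≤ m) :
    Nat.card (BType m n) = (m + n - 1) * (m + n - 2).choose (m - 1) := by
  rw [Nat.card_congr (bEquivSigma hm)]
  rw [Nat.card_eq_fintype_card, Fintype.card_sigma]
  have hval : ∀ a : Fin (m + n - 1),
      Fintype.card ((USet m n (a : ℕ)).powersetCard (m - 1) : Finset (Finset ℕ))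
        = (m + n - 2).choose (m - 1) := fun a => by
    rw [Fintype.card_coe, Finset.card_powersetCard, USet_card (by have := a.2; omega)]
  rw [Finset.sum_congr rfl fun a _ => hval a, Finset.sum_const, Finset.card_univ,
    Fintype.card_fin, smul_eq_mul]

lemma card_AType (hm : 1 ≤ m) :
    Nat.card (AType m n) = (m + n - 1) * (m + n - 2).choose (m - 1) := by
  rw [← Nat.card_eq_of_bijective (gmap m n) ⟨gmap_injective, gmap_surjective⟩, card_BType hm]

lemma key1 (m' n' : ℕ) :
    (m' + n' + 1) * (m' + n').choose m' = (n' + 1) * (m' + n' + 1).choose (n' + 1) := by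
  have hsymm : (m' + n').choose m' = (m' + n').choose n' := by
    have h := Nat.choose_symm (show n' ≤ m' + n' by omega)
    rw [show m' + n' - n' = m' from by omega] at h
    exact h
  have hmul := Nat.add_one_mul_choose_eq (m' + n') n'
  calc (m' + n' + 1) * (m' + n').choose m'
      = (m' + n' + 1) * (m' + n').choose n' := by rw [hsymm]
    _ = (m' + n' + 1).choose (n' + 1) * (n' + 1) := hmul
    _ = (n' + 1) * (m' + n' + 1).choose (n' + 1) := mul_comm _ _

lemma key2 (m' n' : ℕ) :
    (m' + n' + 1) * (m' + n').choose m'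
      = Nat.factorial (m' + n' + 1) / (Nat.factorial m' * Nat.factorial n') := by
  have hfact := Nat.choose_mul_factorial_mul_factorial (show m' ≤ m' + n' by omega)
  rw [show m' + n' - m' = n' from by omega] at hfact
  have hpos : 0 < Nat.factorial m' * Nat.factorial n' :=
    Nat.mul_pos (Nat.factorial_pos _) (Nat.factorial_pos _)
  have hexp : Nat.factorial (m' + n' + 1)
      = ((m' + n' + 1) * (m' + n').choose m') * (Nat.factorial m' * Nat.factorial n') := by
    rw [Nat.factorial_succ, ← hfact]
    ring
  rw [hexp, Nat.mul_div_cancel _ hpos]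

end part6

end RectEdgesAux

/-- For `m, n ≥ 1`, the number of edges of the Hasse diagram of `L(m,n)` equals
`n · C(m+n-1, n) = (m+n-1)!/((m-1)!·(n-1)!)`. -/
theorem rectEdges_eq (m n : ℕ) (hm : 1 ≤ m) (hn : 1 ≤ n) :
    rectEdges m n = n * Nat.choose (m + n - 1) n ∧
    rectEdges m n = Nat.factorial (m + n - 1) /
      (Nat.factorial (m - 1) * Nat.factorial (n - 1)) := by
  have hA : rectEdges m n = Nat.card (RectEdgesAux.AType m n) := rfl
  have hcount : rectEdges m n = (m + n - 1) * (m + n - 2).choose (m - 1) := by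
    rw [hA, RectEdgesAux.card_AType hm]
  obtain ⟨m', rfl⟩ : ∃ m', m = m' + 1 := ⟨m - 1, by omega⟩
  obtain ⟨n', rfl⟩ : ∃ n', n = n' + 1 := ⟨n - 1, by omega⟩
  rw [hcount]
  rw [show m' + 1 + (n' + 1) - 1 = m' + n' + 1 from by omega,
      show m' + 1 + (n' + 1) - 2 = m' + n' from by omega,
      show m' + 1 - 1 = m' from by omega,
      show n' + 1 - 1 = n' from by omega]
  exact ⟨RectEdgesAux.key1 m' n', RectEdgesAux.key2 m' n'⟩
end

section
/- For every Young diagram λ, the number ℓ(Y_λ) of covering pairs (μ, μ') of Young diagrams with μ ⋖ μ' and μ' ⊆ λ equals Σ_{(i,j) ∈ λ} |Y_{λ^↙(i,j)}| · |Y_{λ^↗(i,j)}|, where the sum runs over all cells (i,j) of λ, |Y_ν| denotes the number of Young diagrams contained in the Young diagram ν, λ^↙(i,j) is the Young diagram with cell set {(a,b) : (a+i+1, b) ∈ λ and b < j}, and λ^↗(i,j) is the Young diagram with cell set {(a,b) : a < i and (a, b+j+1) ∈ λ}. -/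
/-- The number of edges of the Hasse diagram of the Young lattice `Y_λ` of all Young
diagrams contained in `λ`: the number of covering pairs `(μ, μ')` of Young diagrams
with `μ ⋖ μ'` and `μ' ⊆ λ`. -/
noncomputable def youngEdges (l : YoungDiagram) : ℕ :=
  Nat.card {p : YoungDiagram × YoungDiagram // p.1 ⋖ p.2 ∧ p.2 ≤ l}

/-- The number of Young diagrams contained in `λ^↙(i,j)`, the Young diagram with cell
set `{(a,b) : (a+i+1, b) ∈ λ and b < j}`; a Young diagram is contained in it exactly
when all its cells lie in this set. -/
noncomputable def countSW (l : YoungDiagram) (i j : ℕ) : ℕ :=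
  Nat.card {μ : YoungDiagram // ∀ d ∈ μ.cells, (d.1 + i + 1, d.2) ∈ l ∧ d.2 < j}

/-- The number of Young diagrams contained in `λ^↗(i,j)`, the Young diagram with cell
set `{(a,b) : a < i and (a, b+j+1) ∈ λ}`; a Young diagram is contained in it exactly
when all its cells lie in this set. -/
noncomputable def countNE (l : YoungDiagram) (i j : ℕ) : ℕ :=
  Nat.card {μ : YoungDiagram // ∀ d ∈ μ.cells, d.1 < i ∧ (d.1, d.2 + j + 1) ∈ l}

/-!
An edge `μ ⋖ μ'` of `Y_λ` adds a single cell `c = (i,j) ∈ λ`, so `μ` contains every cell strictly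
below `c` in the product order and no cell above it. Hence `μ` is determined by `c`, by its cells
in rows `> i` (which lie in columns `< j` and, moved up by `i + 1`, form a diagram `α ⊆ λ^↙(i,j)`)
and by its cells in columns `> j` (which lie in rows `< i` and, moved left by `j + 1`, form a
diagram `β ⊆ λ^↗(i,j)`). Conversely every triple `(c, α, β)` glues back to such an edge, so the
edges are in bijection with these triples.
-/

open Finset

namespace YoungDiagram

variable {μ ν : YoungDiagram} {c : ℕ × ℕ}

def dropRows (μ : YoungDiagram) (k : ℕ) : YoungDiagram where
  cells := μ.cells.filter fun d => (d.1 + k, d.2) ∈ μ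
  isLowerSet x y hyx hx := by
    simp only [coe_filter, Set.mem_ofPred_eq, mem_cells] at hx ⊢
    exact ⟨μ.isLowerSet hyx hx.1, μ.up_left_mem (by have := hyx.1; omega) hyx.2 hx.2⟩

@[simp]
theorem mem_dropRows {k : ℕ} {d : ℕ × ℕ} : d ∈ μ.dropRows k ↔ (d.1 + k, d.2) ∈ μ := by
  refine mem_filter.trans ⟨And.right, fun h => ⟨?_, h⟩⟩
  exact μ.up_left_mem (Nat.le_add_right _ _) le_rfl h

def dropCols (μ : YoungDiagram) (k : ℕ) : YoungDiagram where
  cells := μ.cells.filter fun d => (d.1, d.2 + k) ∈ μ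
  isLowerSet x y hyx hx := by
    simp only [coe_filter, Set.mem_ofPred_eq, mem_cells] at hx ⊢
    exact ⟨μ.isLowerSet hyx hx.1, μ.up_left_mem hyx.1 (by have := hyx.2; omega) hx.2⟩

@[simp]
theorem mem_dropCols {k : ℕ} {d : ℕ × ℕ} : d ∈ μ.dropCols k ↔ (d.1, d.2 + k) ∈ μ := by
  refine mem_filter.trans ⟨And.right, fun h => ⟨?_, h⟩⟩
  exact μ.up_left_mem le_rfl (Nat.le_add_right _ _) h

def insertCell (μ : YoungDiagram) (c : ℕ × ℕ) (h : ∀ d < c, d ∈ μ) : YoungDiagram where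
  cells := insert c μ.cells
  isLowerSet x y hyx hx := by
    simp only [coe_insert, Set.mem_insert_iff, mem_coe, mem_cells] at hx ⊢
    rcases hx with rfl | hx
    · exact hyx.eq_or_lt.imp id (h y)
    · exact Or.inr (μ.isLowerSet hyx hx)

@[simp]
theorem mem_insertCell {h : ∀ d < c, d ∈ μ} {d : ℕ × ℕ} :
    d ∈ μ.insertCell c h ↔ d = c ∨ d ∈ μ :=
  mem_insert

theorem covBy_insertCell (hc : c ∉ μ) (h : ∀ d < c, d ∈ μ) : μ ⋖ μ.insertCell c h :=
  .of_image (.ofMapLEIff cells fun _ _ => cells_subset_iff) (Finset.covBy_insert hc)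

theorem CovBy.exists_insertCell (hcov : μ ⋖ ν) :
    ∃ c ∉ μ, ∃ h : ∀ d < c, d ∈ μ, μ.insertCell c h = ν := by
  obtain ⟨c, ⟨hcν, hcμ⟩, hmin⟩ :=
    wellFounded_lt.has_min {x | x ∈ ν ∧ x ∉ μ} (SetLike.exists_of_lt hcov.lt)
  have h : ∀ d < c, d ∈ μ := fun d hdc => by
    by_contra hdμ
    exact hmin d ⟨ν.isLowerSet hdc.le hcν, hdμ⟩ hdc
  refine ⟨c, hcμ, h, (hcov.eq_or_eq ?_ ?_).resolve_left fun heq => hcμ ?_⟩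
  · exact fun d hd => mem_insertCell.2 (Or.inr hd)
  · exact fun d hd => (mem_insertCell.1 hd).elim (· ▸ hcν) (hcov.le ·)
  · exact heq ▸ mem_insertCell.2 (Or.inl rfl)

def glueCells (c : ℕ × ℕ) (α β : YoungDiagram) : Finset (ℕ × ℕ) :=
  Iio c ∪ α.cells.map (.prodMap (addRightEmbedding (c.1 + 1)) (.refl ℕ)) ∪
    β.cells.map (.prodMap (.refl ℕ) (addRightEmbedding (c.2 + 1)))

theorem mem_glueCells {α β : YoungDiagram} {d : ℕ × ℕ} :
    d ∈ glueCells c α β ↔ d < c ∨ (c.1 < d.1 ∧ (d.1 - (c.1 + 1), d.2) ∈ α) ∨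
      (c.2 < d.2 ∧ (d.1, d.2 - (c.2 + 1)) ∈ β) := by
  obtain ⟨i, j⟩ := c
  obtain ⟨a, b⟩ := d
  simp only [glueCells, mem_union, mem_Iio, mem_map, mem_cells, or_assoc]
  refine or_congr_right (or_congr ⟨?_, fun ⟨hlt, h⟩ => ⟨_, h, ?_⟩⟩
    ⟨?_, fun ⟨hlt, h⟩ => ⟨_, h, ?_⟩⟩)
  · rintro ⟨⟨a', b'⟩, h, he⟩
    obtain ⟨rfl, rfl⟩ : a' + (i + 1) = a ∧ b' = b := by simpa using he
    exact ⟨by omega, by simpa using h⟩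
  · exact Prod.ext (Nat.sub_add_cancel hlt) rfl
  · rintro ⟨⟨a', b'⟩, h, he⟩
    obtain ⟨rfl, rfl⟩ : a' = a ∧ b' + (j + 1) = b := by simpa using he
    exact ⟨by omega, by simpa using h⟩
  · exact Prod.ext rfl (Nat.sub_add_cancel hlt)

/-- The diagram with addable cell `c` whose cells below row `c.1` form `α` and whose cells right
of column `c.2` form `β`. -/
def glue (c : ℕ × ℕ) (α β : YoungDiagram) (hα : ∀ d ∈ α, d.2 < c.2)
    (hβ : ∀ d ∈ β, d.1 < c.1) : YoungDiagram where
  cells := glueCells c α β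
  isLowerSet := by
    rintro ⟨a, b⟩ ⟨a', b'⟩ ⟨ha, hb⟩ hx
    simp only [mem_coe, mem_glueCells, Prod.lt_iff] at hx ⊢
    rcases hx with hx | ⟨hca, hx⟩ | ⟨hcb, hx⟩
    · omega
    · have := hα _ hx
      by_cases h : c.1 < a'
      · exact Or.inr (Or.inl ⟨h, α.up_left_mem (by omega) hb hx⟩)
      · omega
    · have := hβ _ hx
      by_cases h : c.2 < b'
      · exact Or.inr (Or.inr ⟨h, β.up_left_mem ha (by omega) hx⟩)
      · omega

section glue

variable {α β : YoungDiagram} {hα : ∀ d ∈ α, d.2 < c.2} {hβ : ∀ d ∈ β, d.1 < c.1}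

@[simp]
theorem mem_glue {d : ℕ × ℕ} : d ∈ glue c α β hα hβ ↔ d < c ∨
    (c.1 < d.1 ∧ (d.1 - (c.1 + 1), d.2) ∈ α) ∨ (c.2 < d.2 ∧ (d.1, d.2 - (c.2 + 1)) ∈ β) :=
  mem_glueCells

theorem mem_glue_of_lt {d : ℕ × ℕ} (hd : d < c) : d ∈ glue c α β hα hβ :=
  mem_glue.2 (Or.inl hd)

theorem notMem_glue : c ∉ glue c α β hα hβ := by
  simp

theorem dropRows_glue : (glue c α β hα hβ).dropRows (c.1 + 1) = α := by
  refine SetLike.ext fun d => ?_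
  simp only [mem_dropRows, mem_glue, Prod.lt_iff, Nat.add_sub_cancel]
  constructor
  · rintro (h | ⟨-, h⟩ | ⟨-, h⟩)
    · omega
    · exact h
    · exact absurd (hβ _ h) (by omega)
  · exact fun h => Or.inr (Or.inl ⟨by omega, h⟩)

theorem dropCols_glue : (glue c α β hα hβ).dropCols (c.2 + 1) = β := by
  refine SetLike.ext fun d => ?_
  simp only [mem_dropCols, mem_glue, Prod.lt_iff, Nat.add_sub_cancel]
  constructor
  · rintro (h | ⟨-, h⟩ | ⟨-, h⟩)
    · omega
    · exact absurd (hα _ h) (by omega)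
    · exact h
  · exact fun h => Or.inr (Or.inr ⟨by omega, h⟩)

end glue

theorem snd_lt_of_mem_dropRows (hc : c ∉ μ) {d : ℕ × ℕ} (hd : d ∈ μ.dropRows (c.1 + 1)) :
    d.2 < c.2 := by
  by_contra! h
  exact hc (μ.up_left_mem (by omega) h (mem_dropRows.1 hd))

theorem fst_lt_of_mem_dropCols (hc : c ∉ μ) {d : ℕ × ℕ} (hd : d ∈ μ.dropCols (c.2 + 1)) :
    d.1 < c.1 := by
  by_contra! h
  exact hc (μ.up_left_mem h (by omega) (mem_dropCols.1 hd))

theorem glue_dropRows_dropCols (hc : c ∉ μ) (h : ∀ d < c, d ∈ μ) :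
    glue c (μ.dropRows (c.1 + 1)) (μ.dropCols (c.2 + 1)) (fun _ => snd_lt_of_mem_dropRows hc)
      (fun _ => fst_lt_of_mem_dropCols hc) = μ := by
  refine SetLike.ext fun ⟨a, b⟩ => ?_
  simp only [mem_glue, mem_dropRows, mem_dropCols]
  constructor
  · rintro (hd | ⟨ha, hd⟩ | ⟨hb, hd⟩)
    · exact h _ hd
    · rwa [Nat.sub_add_cancel ha] at hd
    · rwa [Nat.sub_add_cancel hb] at hd
  · intro hd
    by_cases ha : c.1 < a
    · exact Or.inr (Or.inl ⟨ha, by rwa [Nat.sub_add_cancel ha]⟩)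
    by_cases hb : c.2 < b
    · exact Or.inr (Or.inr ⟨hb, by rwa [Nat.sub_add_cancel hb]⟩)
    refine Or.inl (lt_of_le_of_ne ⟨not_lt.1 ha, not_lt.1 hb⟩ ?_)
    rintro rfl
    exact hc hd

theorem finite_of_le (ν : YoungDiagram) {p : YoungDiagram → Prop} (hp : ∀ μ, p μ → μ ≤ ν) :
    Finite {μ // p μ} :=
  Finite.of_injective (β := ν.cells.powerset)
    (fun μ => ⟨μ.1.cells, mem_powerset.2 (cells_subset_iff.2 (hp μ.1 μ.2))⟩)
    fun _ _ h => Subtype.ext (YoungDiagram.ext (congrArg Subtype.val h))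

end YoungDiagram

open YoungDiagram

section covers

variable {l : YoungDiagram}

abbrev CornerTriple (l : YoungDiagram) := Σ c : l.cells,
  {α : YoungDiagram // ∀ d ∈ α.cells, (d.1 + c.1.1 + 1, d.2) ∈ l ∧ d.2 < c.1.2} ×
    {β : YoungDiagram // ∀ d ∈ β.cells, d.1 < c.1.1 ∧ (d.1, d.2 + c.1.2 + 1) ∈ l}

theorem insertCell_glue_le {c : ℕ × ℕ} (hc : c ∈ l) {α β : YoungDiagram}
    (hα : ∀ d ∈ α.cells, (d.1 + c.1 + 1, d.2) ∈ l ∧ d.2 < c.2)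
    (hβ : ∀ d ∈ β.cells, d.1 < c.1 ∧ (d.1, d.2 + c.2 + 1) ∈ l) :
    (glue c α β (fun d hd => (hα d hd).2) (fun d hd => (hβ d hd).1)).insertCell c
      (fun _ => mem_glue_of_lt) ≤ l := by
  rintro ⟨a, b⟩ hd
  simp only [mem_insertCell, mem_glue] at hd
  rcases hd with rfl | hd | ⟨ha, hd⟩ | ⟨hb, hd⟩
  · exact hc
  · exact l.isLowerSet hd.le hc
  · convert (hα _ hd).1 using 2
    omega
  · convert (hβ _ hd).2 using 2
    omega

def CornerTriple.toCover :
    CornerTriple l → {p : YoungDiagram × YoungDiagram // p.1 ⋖ p.2 ∧ p.2 ≤ l}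
  | ⟨⟨c, hc⟩, ⟨α, hα⟩, ⟨β, hβ⟩⟩ =>
    let μ := glue c α β (fun d hd => (hα d hd).2) (fun d hd => (hβ d hd).1)
    ⟨(μ, μ.insertCell c fun _ => mem_glue_of_lt),
      covBy_insertCell notMem_glue fun _ => mem_glue_of_lt, insertCell_glue_le hc hα hβ⟩

theorem CornerTriple.toCover_injective : Function.Injective (toCover (l := l)) := by
  rintro ⟨⟨c, hc⟩, ⟨α, hα⟩, ⟨β, hβ⟩⟩ ⟨⟨c', hc'⟩, ⟨α', hα'⟩, ⟨β', hβ'⟩⟩ h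
  simp only [toCover, Subtype.mk.injEq, Prod.mk.injEq] at h
  obtain ⟨hμ, hν⟩ := h
  obtain rfl : c = c' := by
    have hcν := hν ▸ mem_insertCell.2 (Or.inl rfl)
    exact (mem_insertCell.1 hcν).resolve_right (hμ ▸ notMem_glue)
  obtain rfl : α = α' := by simpa only [dropRows_glue] using congrArg (dropRows · (c.1 + 1)) hμ
  obtain rfl : β = β' := by simpa only [dropCols_glue] using congrArg (dropCols · (c.2 + 1)) hμ
  rfl

theorem CornerTriple.toCover_surjective : Function.Surjective (toCover (l := l)) := by
  rintro ⟨⟨μ, ν⟩, hcov, hle⟩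
  change μ ⋖ ν at hcov
  change ν ≤ l at hle
  obtain ⟨c, hcμ, h, rfl⟩ := hcov.exists_insertCell
  have hμl : μ ≤ l := hcov.le.trans hle
  have hα : ∀ d ∈ (μ.dropRows (c.1 + 1)).cells, (d.1 + c.1 + 1, d.2) ∈ l ∧ d.2 < c.2 :=
    fun d hd => ⟨hμl (mem_dropRows.1 hd), snd_lt_of_mem_dropRows hcμ hd⟩
  have hβ : ∀ d ∈ (μ.dropCols (c.2 + 1)).cells, d.1 < c.1 ∧ (d.1, d.2 + c.2 + 1) ∈ l :=
    fun d hd => ⟨fst_lt_of_mem_dropCols hcμ hd, hμl (mem_dropCols.1 hd)⟩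
  refine ⟨⟨⟨c, hle (mem_insertCell.2 (Or.inl rfl))⟩, ⟨_, hα⟩, ⟨_, hβ⟩⟩, ?_⟩
  simp only [toCover, glue_dropRows_dropCols hcμ h]

end covers

/-- The number of edges of the Hasse diagram of the Young lattice `Y_λ` equals
`Σ_{(i,j) ∈ λ} |Y_{λ^↙(i,j)}| · |Y_{λ^↗(i,j)}|`. -/
theorem youngEdges_eq_sum (l : YoungDiagram) :
    youngEdges l = ∑ c ∈ l.cells, countSW l c.1 c.2 * countNE l c.1 c.2 := by
  have (c : l.cells) :
      Finite {α : YoungDiagram // ∀ d ∈ α.cells, (d.1 + c.1.1 + 1, d.2) ∈ l ∧ d.2 < c.1.2} :=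
    finite_of_le l fun _ hα d hd => l.up_left_mem (by omega) le_rfl (hα d hd).1
  have (c : l.cells) :
      Finite {β : YoungDiagram // ∀ d ∈ β.cells, d.1 < c.1.1 ∧ (d.1, d.2 + c.1.2 + 1) ∈ l} :=
    finite_of_le l fun _ hβ d hd => l.up_left_mem le_rfl (by omega) (hβ d hd).2
  rw [youngEdges, ← Nat.card_eq_of_bijective _
    ⟨CornerTriple.toCover_injective, CornerTriple.toCover_surjective⟩, Nat.card_sigma]
  simp only [Nat.card_prod]
  exact Finset.sum_coe_sort l.cells fun c => countSW l c.1 c.2 * countNE l c.1 c.2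
end
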